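/- Let G be an ordered-like additive semigroup and let A = ⊕_{σ∈G} A_σ be a G-graded ring that is a graded domain (the product of two nonzero homogeneous elements is nonzero). Then A₀ is a strongly completely prime subring of A: for any two nonzero elements a, b of A, if ab ∈ A₀ then a ∈ A₀ and b ∈ A₀. -/

import Mathlib

/-!
Ordered-likeness gives unique sums in `G`: when `S₁ + S₂ = {0}`, both sets are `{0}`, since
`a + b = 0` forces `a = b = 0`. Unique sums pass to the Grothendieck group, where Strojnowski's
theorem upgrades them to two unique sums, and these restrict back to `G`. If `a` or `b` had
two homogeneous components, `supp a + supp b` would contain two uniquely represented degrees,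
one of them nonzero; the component of `a * b` in that degree is the product of two nonzero
homogeneous components, hence nonzero, contradicting `a * b ∈ A₀`. So `a` and `b` are
homogeneous, of degrees adding up to `0`, hence both of degree `0`.
-/

open Pointwise

/-- An additive commutative semigroup with zero is *ordered-like* if `0` is its only
invertible element and for any two finite nonempty subsets `S₁`, `S₂` with
`S₁ + S₂ ≠ {0}` there is `c ∈ S₁ + S₂` with exactly one representation `c = a + b`,
`a ∈ S₁`, `b ∈ S₂`. -/
def OrderedLike (G : Type*) [AddCommMonoid G] [DecidableEq G] : Prop :=
  (∀ a b : G, a + b = 0 → a = 0) ∧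
    ∀ S₁ S₂ : Finset G, S₁.Nonempty → S₂.Nonempty → S₁ + S₂ ≠ ({0} : Finset G) →
      ∃ c ∈ S₁ + S₂, ∃! p : G × G, p.1 ∈ S₁ ∧ p.2 ∈ S₂ ∧ p.1 + p.2 = c

open Finset

namespace OrderedLike

variable {G : Type*} [AddCommMonoid G] [DecidableEq G]

theorem add_eq_zero (hG : OrderedLike G) {a b : G} : a + b = 0 ↔ a = 0 ∧ b = 0 :=
  ⟨fun h => ⟨hG.1 a b h, hG.1 b a (by rwa [add_comm])⟩, fun ⟨ha, hb⟩ => by rw [ha, hb, add_zero]⟩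

theorem uniqueSums (hG : OrderedLike G) : UniqueSums G where
  uniqueAdd_of_nonempty {A B} hA hB := by
    by_cases hAB : A + B = {0}
    · have hzero : ∀ a ∈ A, ∀ b ∈ B, a = 0 ∧ b = 0 := fun a ha b hb =>
        hG.add_eq_zero.1 (mem_singleton.1 (hAB ▸ add_mem_add ha hb))
      obtain ⟨a, ha⟩ := hA
      obtain ⟨b, hb⟩ := hB
      refine ⟨a, ha, b, hb, fun a' b' ha' hb' _ => ?_⟩
      rw [(hzero a ha b hb).1, (hzero a ha b hb).2]
      exact hzero a' ha' b' hb'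
    · obtain ⟨c, -, hc⟩ := hG.2 A B hA hB hAB
      obtain ⟨a, b, ha, hb, hu⟩ := UniqueAdd.exists_iff_exists_existsUnique.2
        ⟨c, by simpa only [mem_product, and_assoc] using hc⟩
      exact ⟨a, ha, b, hb, hu⟩

end OrderedLike

namespace Algebra.GrothendieckAddGroup

variable {M : Type*} [AddCommMonoid M]

theorem exists_forall_add_eq_of (X : Finset (GrothendieckAddGroup M)) :
    ∃ d : M, ∀ x ∈ X, ∃ m : M, x + of d = of m := by
  classical
  induction X using Finset.induction_on with
  | empty => exact ⟨0, by simp⟩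
  | insert x X _ ih =>
    obtain ⟨d, hd⟩ := ih
    obtain ⟨⟨m, s, _⟩, hx⟩ := (AddLocalization.addMonoidOf (⊤ : AddSubmonoid M)).surj x
    change x + of s = of m at hx
    refine ⟨d + s, forall_mem_insert _ _ _ |>.2 ⟨⟨m + d, ?_⟩, fun y hy => ?_⟩⟩
    · rw [map_add, map_add, ← hx]; abel
    · obtain ⟨n, hn⟩ := hd y hy
      exact ⟨n + s, by rw [map_add, map_add, ← hn]; abel⟩

theorem uniqueSums [UniqueSums M] : UniqueSums (GrothendieckAddGroup M) where
  uniqueAdd_of_nonempty {X Y} hX hY := by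
    have : IsCancelAdd M := UniqueSums.toIsCancelAdd
    obtain ⟨d, hd⟩ := exists_forall_add_eq_of X
    obtain ⟨e, he⟩ := exists_forall_add_eq_of Y
    let X₀ := X.preimage (fun m => of m - of d) (sub_left_injective.comp of_injective).injOn
    let Y₀ := Y.preimage (fun m => of m - of e) (sub_left_injective.comp of_injective).injOn
    obtain ⟨x, hx⟩ := hX
    obtain ⟨y, hy⟩ := hY
    obtain ⟨m₀, hm₀⟩ := hd x hx
    obtain ⟨n₀, hn₀⟩ := he y hy
    obtain ⟨m, hm, n, hn, hu⟩ := UniqueSums.uniqueAdd_of_nonempty (A := X₀) (B := Y₀)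
      ⟨m₀, mem_preimage.2 (eq_sub_of_add_eq hm₀ ▸ hx)⟩
      ⟨n₀, mem_preimage.2 (eq_sub_of_add_eq hn₀ ▸ hy)⟩
    refine ⟨_, mem_preimage.1 hm, _, mem_preimage.1 hn, fun x y hx hy hxy => ?_⟩
    obtain ⟨m', hm'⟩ := hd x hx
    obtain ⟨n', hn'⟩ := he y hy
    obtain ⟨rfl, rfl⟩ := hu (mem_preimage.2 (eq_sub_of_add_eq hm' ▸ hx))
      (mem_preimage.2 (eq_sub_of_add_eq hn' ▸ hy)) <| of_injective <| by
      rw [map_add, map_add, ← hm', ← hn', add_add_add_comm, hxy]; abel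
    exact ⟨eq_sub_of_add_eq hm', eq_sub_of_add_eq hn'⟩

end Algebra.GrothendieckAddGroup

theorem UniqueSums.toTwoUniqueSums_of_addCommMonoid {M : Type*} [AddCommMonoid M] [UniqueSums M] :
    TwoUniqueSums M :=
  have : IsCancelAdd M := UniqueSums.toIsCancelAdd
  have : UniqueSums (Algebra.GrothendieckAddGroup M) := Algebra.GrothendieckAddGroup.uniqueSums
  TwoUniqueSums.of_injective_addHom Algebra.GrothendieckAddGroup.of.toAddHom
    Algebra.GrothendieckAddGroup.of_injective UniqueSums.toTwoUniqueSums_of_addGroup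

theorem TwoUniqueSums.exists_uniqueAdd_add_ne {ι : Type*} [Add ι] [TwoUniqueSums ι]
    {A B : Finset ι} (h : 1 < #A * #B) (k : ι) :
    ∃ i ∈ A, ∃ j ∈ B, i + j ≠ k ∧ UniqueAdd A B i j := by
  obtain ⟨p, hp, q, hq, hpq, hup, huq⟩ := TwoUniqueSums.uniqueAdd_of_one_lt_card h
  rw [mem_product] at hp hq
  by_cases hpk : p.1 + p.2 = k
  · refine ⟨q.1, hq.1, q.2, hq.2, fun hqk => hpq ?_, huq⟩
    obtain ⟨h1, h2⟩ := hup hq.1 hq.2 (hqk.trans hpk.symm)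
    exact Prod.ext h1.symm h2.symm
  · exact ⟨p.1, hp.1, p.2, hp.2, hpk, hup⟩

namespace DirectSum

section Decomposition

variable {ι M σ : Type*} [DecidableEq ι] [AddCommMonoid M] [SetLike σ M] [AddSubmonoidClass σ M]
  (ℳ : ι → σ) [Decomposition ℳ] [∀ i (x : ℳ i), Decidable (x ≠ 0)]

theorem support_decompose_nonempty {x : M} (hx : x ≠ 0) : (decompose ℳ x).support.Nonempty := by
  rw [nonempty_iff_ne_empty, Ne, DFinsupp.support_eq_empty, ← decompose_zero ℳ,
    (decompose ℳ).injective.eq_iff]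
  exact hx

theorem isHomogeneousElem_of_card_support_eq_one {x : M} (h : #(decompose ℳ x).support = 1) :
    SetLike.IsHomogeneousElem ℳ x := by
  obtain ⟨i, hi⟩ := card_eq_one.1 h
  refine ⟨i, ?_⟩
  rw [← sum_support_decompose ℳ x, hi, sum_singleton]
  exact SetLike.coe_mem _

end Decomposition

section GradedRing

variable {ι A σ : Type*} [DecidableEq ι] [AddMonoid ι] [Semiring A] [SetLike σ A]
  [AddSubmonoidClass σ A] (𝒜 : ι → σ) [GradedRing 𝒜] [∀ i (x : 𝒜 i), Decidable (x ≠ 0)]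

theorem coe_decompose_mul_add_of_uniqueAdd {a b : A} {i j : ι}
    (hi : i ∈ (decompose 𝒜 a).support) (hj : j ∈ (decompose 𝒜 b).support)
    (h : UniqueAdd (decompose 𝒜 a).support (decompose 𝒜 b).support i j) :
    (decompose 𝒜 (a * b) (i + j) : A) = decompose 𝒜 a i * decompose 𝒜 b j := by
  rw [decompose_mul, coe_mul_apply]
  convert sum_singleton (fun p : ι × ι => (decompose 𝒜 a p.1 : A) * decompose 𝒜 b p.2) (i, j)
  ext ⟨i', j'⟩
  simp only [mem_filter, mem_product, mem_singleton, Prod.mk.injEq]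
  refine ⟨fun ⟨⟨hi', hj'⟩, he⟩ => h hi' hj' he, ?_⟩
  rintro ⟨rfl, rfl⟩
  exact ⟨⟨hi, hj⟩, rfl⟩

theorem isHomogeneousElem_of_mul_mem [TwoUniqueSums ι]
    (hdom : ∀ (i j : ι) (a b : A), a ∈ 𝒜 i → b ∈ 𝒜 j → a ≠ 0 → b ≠ 0 → a * b ≠ 0)
    {a b : A} (ha : a ≠ 0) (hb : b ≠ 0) {k : ι} (hab : a * b ∈ 𝒜 k) :
    SetLike.IsHomogeneousElem 𝒜 a ∧ SetLike.IsHomogeneousElem 𝒜 b := by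
  set S := (decompose 𝒜 a).support
  set T := (decompose 𝒜 b).support
  have hST : #S * #T ≤ 1 := by
    by_contra! h
    obtain ⟨i, hi, j, hj, hk, hu⟩ := TwoUniqueSums.exists_uniqueAdd_add_ne h k
    have h0 : (decompose 𝒜 (a * b) (i + j) : A) = 0 := decompose_of_mem_ne 𝒜 hab hk.symm
    rw [coe_decompose_mul_add_of_uniqueAdd 𝒜 hi hj hu] at h0
    exact hdom i j _ _ (SetLike.coe_mem _) (SetLike.coe_mem _)
      (by simpa using DFinsupp.mem_support_iff.1 hi)
      (by simpa using DFinsupp.mem_support_iff.1 hj) h0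
  have hS := (support_decompose_nonempty 𝒜 ha).card_pos
  have hT := (support_decompose_nonempty 𝒜 hb).card_pos
  exact ⟨isHomogeneousElem_of_card_support_eq_one 𝒜 (by nlinarith),
    isHomogeneousElem_of_card_support_eq_one 𝒜 (by nlinarith)⟩

end GradedRing

end DirectSum

/-- If `G` is an ordered-like additive semigroup and
`A = ⊕_{σ∈G} A_σ` is a `G`-graded ring which is a graded domain (the product of two
nonzero homogeneous elements is nonzero), then `A₀ = 𝒜 0` is a strongly completely
prime subring of `A`: for nonzero `a b : A` with `a * b ∈ 𝒜 0` we have `a ∈ 𝒜 0`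
and `b ∈ 𝒜 0`. -/
theorem gradeZero_stronglyCompletelyPrime_of_orderedLike
    {G : Type*} [AddCommMonoid G] [DecidableEq G] (hG : OrderedLike G)
    {A : Type*} [Ring A] (𝒜 : G → AddSubgroup A) [GradedRing 𝒜]
    (hdom : ∀ (i j : G) (a b : A), a ∈ 𝒜 i → b ∈ 𝒜 j → a ≠ 0 → b ≠ 0 → a * b ≠ 0)
    (a b : A) (ha : a ≠ 0) (hb : b ≠ 0) (hab : a * b ∈ 𝒜 0) :
    a ∈ 𝒜 0 ∧ b ∈ 𝒜 0 := by
  classical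
  have : TwoUniqueSums G := have := hG.uniqueSums; UniqueSums.toTwoUniqueSums_of_addCommMonoid
  obtain ⟨⟨i, hai⟩, j, hbj⟩ := DirectSum.isHomogeneousElem_of_mul_mem 𝒜 hdom ha hb hab
  have hij : i + j = 0 := DirectSum.degree_eq_of_mem_mem 𝒜 (SetLike.mul_mem_graded hai hbj) hab
    (hdom i j a b hai hbj ha hb)
  obtain ⟨rfl, rfl⟩ := hG.add_eq_zero.1 hij
  exact ⟨hai, hbj⟩
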